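/- Let n ≥ 2, let L be a real symmetric positive semidefinite n×n matrix with eigenvalues 0 = λ₁ ≤ λ₂ ≤ … ≤ λₙ, λ₂ > 0, and orthonormal eigenvectors v₁, …, vₙ where v₁ = (1/√n)·1ₙ; let α > 0, hᵢ = 1/(1 + αλᵢ), qᵢ = 1 − hᵢ, and σᵢ ≥ 0. Suppose the ground-truth signal is band-limited: x* = Σ_{j ∈ A} ωⱼ vⱼ for some subset A ⊆ {1, …, n} and real coefficients ωⱼ. Then Σᵢ₌₂ⁿ qᵢ² (vᵢᵀ x̄*)² + Σᵢ₌₁ⁿ hᵢ² σᵢ² ≤ (1/(1 + 1/(αλₙ)))² · Σ_{j ∈ A, j ≠ 1} ωⱼ² + (1/(1 + αλ₂))² · Σᵢ₌₂ⁿ σᵢ² + σ₁², where x̄* = x* − ((1ₙᵀx*)/n)·1ₙ. In particular the coefficient ω₁ of the constant eigenvector v₁ does not contribute to the bound. -/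

import Mathlib

/-!
The two sums are bounded separately.  For `i ≥ 2` the eigenvector `vᵢ` is orthogonal to the
constant vector `v₁`, so its coordinates sum to zero: centring `x*` does not change `vᵢᵀ x*`, which
by orthonormality is `ωᵢ` for `i ∈ A` and `0` otherwise.  The gains `qᵢ = αλᵢ / (1 + αλᵢ)` increase
with `λᵢ`, so they are at most `αλₙ / (1 + αλₙ)`; the gains `hᵢ` decrease, so for `i ≥ 2` they are
at most `h₂`, while `h₁ = 1`.
-/

open Matrix Finset

lemma one_sub_one_div_one_add_nonneg {t : ℝ} (ht : 0 ≤ t) : 0 ≤ 1 - 1 / (1 + t) := by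
  rw [sub_nonneg, div_le_one (by positivity)]
  linarith

/-- At `T = 0` the right-hand side is `1`, since `1 / 0 = 0`. -/
lemma one_sub_one_div_one_add_le {t T : ℝ} (ht : 0 ≤ t) (htT : t ≤ T) :
    1 - 1 / (1 + t) ≤ 1 / (1 + 1 / T) := by
  rcases (ht.trans htT).eq_or_lt with rfl | hT
  · rw [le_antisymm htT ht]
    norm_num
  · have hT' : 1 / (1 + 1 / T) = T / (1 + T) := by field_simp; ring
    rw [hT', one_sub_div (by positivity), add_sub_cancel_left,
      div_le_div_iff₀ (by positivity) (by positivity)]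
    nlinarith

lemma sum_sq_mul_sq_le {ι : Type*} (s : Finset ι) (c f : ι → ℝ) {C : ℝ}
    (hc : ∀ i ∈ s, 0 ≤ c i ∧ c i ≤ C) :
    ∑ i ∈ s, c i ^ 2 * f i ^ 2 ≤ C ^ 2 * ∑ i ∈ s, f i ^ 2 := by
  rw [mul_sum]
  refine sum_le_sum fun i hi => ?_
  gcongr
  · exact (hc i hi).1
  · exact (hc i hi).2

lemma sum_eq_zero_of_dotProduct_const_eq_zero {m : Type*} [Fintype m] {u : m → ℝ} {c : ℝ}
    (hc : c ≠ 0) (hu : u ⬝ᵥ (fun _ => c) = 0) : ∑ i, u i = 0 := by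
  simp only [dotProduct, ← sum_mul] at hu
  exact (mul_eq_zero.mp hu).resolve_right hc

lemma dotProduct_sub_const_smul_one {m : Type*} [Fintype m] {u : m → ℝ} (hu : ∑ i, u i = 0)
    (x : m → ℝ) (c : ℝ) : u ⬝ᵥ (x - c • fun _ => (1 : ℝ)) = u ⬝ᵥ x := by
  rw [dotProduct_sub, dotProduct_smul, ← Pi.one_def, dotProduct_one, hu, smul_zero, sub_zero]

lemma dotProduct_sum_smul_of_orthonormal {m ι : Type*} [Fintype m] [DecidableEq ι]
    {v : ι → m → ℝ} (horth : ∀ i j, v i ⬝ᵥ v j = if i = j then (1 : ℝ) else 0)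
    (A : Finset ι) (ω : ι → ℝ) (i : ι) :
    v i ⬝ᵥ ∑ j ∈ A, ω j • v j = if i ∈ A then ω i else 0 := by
  simp [dotProduct_sum, dotProduct_smul, horth]

lemma sum_erase_ite_mem_sq {ι : Type*} [Fintype ι] [DecidableEq ι] (A : Finset ι) (ω : ι → ℝ)
    (a : ι) : ∑ i ∈ univ.erase a, (if i ∈ A then ω i else 0) ^ 2 = ∑ j ∈ A.erase a, ω j ^ 2 := by
  simp only [ite_pow, zero_pow two_ne_zero, sum_ite_mem]
  congr 1
  ext
  simp

/-- MSE-UB bound for band-limited graph signals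
`x* = Σ_{j ∈ A} ωⱼ vⱼ`; the coefficient `ω₁` of the constant eigenvector does not
contribute to the bound. -/
theorem stmt_17 (n : ℕ) [NeZero n] (hn : 2 ≤ n)
    (ev : Fin n → ℝ) (v : Fin n → Fin n → ℝ)
    (hev0 : ev 0 = 0) (hmono : Monotone ev)
    (horth : ∀ i j, v i ⬝ᵥ v j = if i = j then (1 : ℝ) else 0)
    (hv0 : v 0 = fun _ => 1 / Real.sqrt n)
    (α : ℝ) (hα : 0 < α)
    (σ : Fin n → ℝ)
    (A : Finset (Fin n)) (ω : Fin n → ℝ) (xs : Fin n → ℝ)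
    (hxs : xs = ∑ j ∈ A, ω j • v j) :
    (∑ i ∈ Finset.univ.erase 0,
        (1 - 1 / (1 + α * ev i)) ^ 2 *
          (v i ⬝ᵥ (xs - ((∑ j, xs j) / (n : ℝ)) • fun _ => (1 : ℝ))) ^ 2)
      + ∑ i, (1 / (1 + α * ev i)) ^ 2 * σ i ^ 2
    ≤ (1 / (1 + 1 / (α * ev ⟨n - 1, by omega⟩))) ^ 2 *
        (∑ j ∈ A.erase 0, ω j ^ 2)
      + (1 / (1 + α * ev 1)) ^ 2 * (∑ i ∈ Finset.univ.erase 0, σ i ^ 2)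
      + σ 0 ^ 2 := by
  have hαev : ∀ i, 0 ≤ α * ev i := fun i =>
    mul_nonneg hα.le (hev0 ▸ hmono (Fin.zero_le i))
  have hαev_le_last : ∀ i, α * ev i ≤ α * ev ⟨n - 1, by omega⟩ := fun i =>
    mul_le_mul_of_nonneg_left (hmono (Fin.le_def.mpr (by simp; omega))) hα.le
  have hαev_one_le : ∀ i ≠ 0, α * ev 1 ≤ α * ev i := fun i hi =>
    mul_le_mul_of_nonneg_left (hmono (Fin.one_le_of_ne_zero hi)) hα.le
  have hcoef : ∀ i ≠ 0, v i ⬝ᵥ (xs - ((∑ j, xs j) / (n : ℝ)) • fun _ => (1 : ℝ))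
      = if i ∈ A then ω i else 0 := fun i hi => by
    have hvi : ∑ j, v i j = 0 := sum_eq_zero_of_dotProduct_const_eq_zero
      (c := 1 / Real.sqrt n) (by simp; omega) (by rw [← hv0, horth, if_neg hi])
    rw [dotProduct_sub_const_smul_one hvi, hxs, dotProduct_sum_smul_of_orthonormal horth]
  have hbias := sum_sq_mul_sq_le (univ.erase 0) (fun i => 1 - 1 / (1 + α * ev i))
    (fun i => if i ∈ A then ω i else 0) fun i _ =>
      ⟨one_sub_one_div_one_add_nonneg (hαev i), one_sub_one_div_one_add_le (hαev i)
        (hαev_le_last i)⟩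
  have hvar := sum_sq_mul_sq_le (univ.erase 0) (fun i => 1 / (1 + α * ev i)) σ
    (C := 1 / (1 + α * ev 1)) fun i hi =>
    ⟨by have := hαev i; positivity,
      one_div_le_one_div_of_le (by linarith [hαev 1])
        (by linarith [hαev_one_le i (ne_of_mem_erase hi)])⟩
  rw [sum_erase_ite_mem_sq] at hbias
  rw [sum_congr rfl fun i hi => by rw [hcoef i (ne_of_mem_erase hi)],
    ← add_sum_erase _ _ (mem_univ 0), hev0]
  simp only [mul_zero, add_zero, div_one, one_pow, one_mul]
  linarith
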